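/- arXiv:2501.08318 — 2 statements merged into one kernel-verified Lean document; each statement's English description precedes it below -/
import Mathlib

section
/- Let L be a finite lattice with |L| ≥ 3 and Dim(L) = m, let C be a finite nonempty chain disjoint from L, and let L' = L ]ᵇₐ C be the adjunct with respect to a pair a < b in L with b not covering a. Then m ≤ Dim(L') ≤ m + 1. -/
/-- A family of `t` relations is a *realizer* of the relation `le`:
each member is a linear order (on the whole ground set) and their
intersection is exactly `le`.  (In particular each member extends `le`.) -/
def IsRealizer {α : Type*} (le : α → α → Prop) {t : ℕ}
    (R : Fin t → α → α → Prop) : Prop :=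
  (∀ i, IsLinearOrder α (R i)) ∧ ∀ x y, le x y ↔ ∀ i, R i x y

/-- The Dushnik–Miller order dimension of the relation `le`: the least
positive number `t` of linear extensions whose intersection is `le`. -/
noncomputable def orderDim {α : Type*} (le : α → α → Prop) : ℕ :=
  sInf {t | 0 < t ∧ ∃ R : Fin t → α → α → Prop, IsRealizer le R}

/-- An element of a poset is doubly irreducible if it has at most one lower
cover and at most one upper cover. -/
def DoublyIrreducible {α : Type*} [PartialOrder α] (z : α) : Prop :=
  {w | w ⋖ z}.Subsingleton ∧ {w | z ⋖ w}.Subsingleton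

/-- An element is reducible if it is not doubly irreducible. -/
def Reducible {α : Type*} [PartialOrder α] (z : α) : Prop :=
  ¬ DoublyIrreducible z

/-- A lattice is an RC-lattice if any two of its reducible elements are
comparable. -/
def IsRCLattice (α : Type*) [Lattice α] : Prop :=
  ∀ x y : α, Reducible x → Reducible y → (x ≤ y ∨ y ≤ x)


/-- The ground set of the complete fundamental basic block `L_r`:
the chain `A₁ ≺ x₁ ≺ A₂ ≺ ⋯ ≺ x_{r-1} ≺ A_r` (of length `2r-1`,
`A_{i+1}` sitting at position `2i`, `x_{i+1}` at position `2i+1`),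
together with the doubly irreducible elements `c_{ij}` for `1 ≤ i < j ≤ r`. -/
def Lr (r : ℕ) : Type :=
  Fin (2 * r - 1) ⊕ {p : Fin r × Fin r // (p.1 : ℕ) < (p.2 : ℕ)}

namespace Lr

/-- The order of `L_r`: on the chain it is the usual order; `z ≤ c_{ij}` iff
`z ≤ A_i`; `c_{ij} ≤ z` iff `A_j ≤ z`; `c_{ij} ≤ c_{kl}` iff `(i,j) = (k,l)`
or `j ≤ k`. -/
def le {r : ℕ} (x y : Lr r) : Prop :=
  match x, y with
  | Sum.inl k, Sum.inl k' => (k : ℕ) ≤ (k' : ℕ)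
  | Sum.inl k, Sum.inr c => (k : ℕ) ≤ 2 * (c.1.1 : ℕ)
  | Sum.inr c, Sum.inl k => 2 * (c.1.2 : ℕ) ≤ (k : ℕ)
  | Sum.inr c, Sum.inr c' =>
      ((c.1.1 : ℕ) = (c'.1.1 : ℕ) ∧ (c.1.2 : ℕ) = (c'.1.2 : ℕ)) ∨
        (c.1.2 : ℕ) ≤ (c'.1.1 : ℕ)

instance (r : ℕ) : PartialOrder (Lr r) where
  le := le
  le_refl x := by rcases x with k | ⟨p, hp⟩ <;> simp [le]
  le_trans x y z hxy hyz := by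
    rcases x with k | ⟨p, hp⟩ <;> rcases y with k' | ⟨q, hq⟩ <;>
      rcases z with k'' | ⟨t, ht⟩ <;>
      simp only [le] at hxy hyz ⊢ <;> omega
  le_antisymm x y hxy hyx := by
    rcases x with k | ⟨p, hp⟩ <;> rcases y with k' | ⟨q, hq⟩ <;>
      simp only [le] at hxy hyx
    · exact congrArg Sum.inl (Fin.ext (by omega))
    · omega
    · omega
    · have h1 : (p.1 : ℕ) = (q.1 : ℕ) := by omega
      have h2 : (p.2 : ℕ) = (q.2 : ℕ) := by omega
      exact congrArg Sum.inr (Subtype.ext (Prod.ext (Fin.ext h1) (Fin.ext h2)))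

/-- The reducible element `A_{i+1}` of `L_r` (`i` is 0-based). -/
def A {r : ℕ} (i : Fin r) : Lr r :=
  Sum.inl ⟨2 * (i : ℕ), by have := i.2; omega⟩

/-- The doubly irreducible chain element `x_{i+1}` of `L_r` (`i` is 0-based). -/
def X {r : ℕ} (i : Fin (r - 1)) : Lr r :=
  Sum.inl ⟨2 * (i : ℕ) + 1, by have := i.2; omega⟩

/-- The doubly irreducible element `c_{(i+1)(j+1)}` of `L_r`
(`i`, `j` are 0-based). -/
def c {r : ℕ} (i j : Fin r) (h : (i : ℕ) < (j : ℕ)) : Lr r :=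
  Sum.inr ⟨(i, j), h⟩

end Lr


/-- The adjunct order `L₁ ]ᵇₐ L₂` on the disjoint union of two ordered sets
(with respect to the pair `a < b` of the first one):
`x ≤ y` iff both lie in `L₁` and `x ≤ y` there, or both lie in `L₂` and
`x ≤ y` there, or `x ∈ L₁`, `y ∈ L₂` and `x ≤ a`, or `x ∈ L₂`, `y ∈ L₁`
and `b ≤ y`. -/
def adjunctLE {α β : Type*} [LE α] [LE β] (a b : α) :
    α ⊕ β → α ⊕ β → Prop
  | Sum.inl x, Sum.inl y => x ≤ y
  | Sum.inl x, Sum.inr _ => x ≤ a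
  | Sum.inr _, Sum.inl y => b ≤ y
  | Sum.inr x, Sum.inr y => x ≤ y

/-- A subset of a lattice is a sublattice if it is closed under `⊔` and `⊓`. -/
def IsSublatticeSet {α : Type*} [Lattice α] (S : Set α) : Prop :=
  ∀ ⦃x⦄, x ∈ S → ∀ ⦃y⦄, y ∈ S → x ⊔ y ∈ S ∧ x ⊓ y ∈ S

/-- A finite lattice on `n` elements is dismantlable if there is a chain
`L₁ ⊆ L₂ ⊆ ⋯ ⊆ Lₙ` of sublattices with `|Lᵢ| = i` exhausting the lattice. -/
def Dismantlable (α : Type*) [Lattice α] : Prop :=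
  ∃ S : Fin (Nat.card α) → Set α,
    (∀ i, IsSublatticeSet (S i)) ∧
    (∀ i j, i ≤ j → S i ⊆ S j) ∧
    (∀ i, Nat.card (S i) = (i : ℕ) + 1) ∧
    (∀ x : α, ∃ i, x ∈ S i)

/-- The cover graph of a poset: `x` and `y` are adjacent iff one covers the
other. -/
def coverGraph (α : Type*) [PartialOrder α] : SimpleGraph α where
  Adj x y := x ⋖ y ∨ y ⋖ x
  symm := ⟨fun x y h => h.symm⟩
  loopless := ⟨fun x h => by rcases h with h | h <;> exact lt_irrefl x h.lt⟩

/-- The nullity of a poset: (number of covering pairs) − (number of elements)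
+ (number of connected components of the cover graph). -/
noncomputable def nullity (α : Type*) [PartialOrder α] : ℤ :=
  (Nat.card {p : α × α // p.1 ⋖ p.2} : ℤ) - (Nat.card α : ℤ) +
    (Nat.card (coverGraph α).ConnectedComponent : ℤ)

/-- `(a, b)` is an adjunct pair of the lattice `α`: `a < b` and `α` can be
partitioned into nonempty sublattices `K` and `M` with `a, b ∈ K`, `b` not
covering `a` within `K`, such that for `x ∈ K`, `y ∈ M`: `x ≤ y ↔ x ≤ a`
and `y ≤ x ↔ b ≤ x`. -/
def IsAdjunctPair {α : Type*} [Lattice α] (a b : α) : Prop :=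
  a < b ∧ ∃ K M : Set α, K.Nonempty ∧ M.Nonempty ∧ Disjoint K M ∧
    K ∪ M = Set.univ ∧ IsSublatticeSet K ∧ IsSublatticeSet M ∧
    a ∈ K ∧ b ∈ K ∧ (∃ z ∈ K, a < z ∧ z < b) ∧
    ∀ x ∈ K, ∀ y ∈ M, (x ≤ y ↔ x ≤ a) ∧ (y ≤ x ↔ b ≤ x)

/-- `s` is the least upper bound of `x` and `y` with respect to the
relation `le`. -/
def IsLUBRel {γ : Type*} (le : γ → γ → Prop) (x y s : γ) : Prop :=
  le x s ∧ le y s ∧ ∀ z, le x z → le y z → le s z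

/-- `s` is the greatest lower bound of `x` and `y` with respect to the
relation `le`. -/
def IsGLBRel {γ : Type*} (le : γ → γ → Prop) (x y s : γ) : Prop :=
  le s x ∧ le s y ∧ ∀ z, le z x → le z y → le z s

/-- `y` covers `x` with respect to the relation `le`. -/
def RelCovBy {γ : Type*} (le : γ → γ → Prop) (x y : γ) : Prop :=
  le x y ∧ x ≠ y ∧ ∀ z, le x z → le z y → z = x ∨ z = y

/-!
Restricting a realizer of `L ]ᵇₐ C` to `L` gives a realizer of `L`, so `Dim L ≤ Dim L'`.
Conversely, from a realizer `R₁, …, R_m` of `L` one gets a realizer of `L'` by splicing the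
chain `C` into each `Rᵢ` directly above `a`, and adding one more linear extension of `L` in
which the elements not above `b` come first, with `C` spliced in directly after them. The
first `m` orders force `x ≤ a` for `x ∈ L` below `C`, while the extra order forces `b ≤ y` for
`y ∈ L` above `C`. If `L` has no realizer, neither has `L'`, and both dimensions take the junk
value `0`.
-/

section Realizer

variable {γ : Type*} {le : γ → γ → Prop}

theorem orderDim_le_of_isRealizer {t : ℕ} (ht : 0 < t) {R : Fin t → γ → γ → Prop}
    (hR : IsRealizer le R) : orderDim le ≤ t :=
  Nat.sInf_le ⟨ht, R, hR⟩

theorem exists_isRealizer_orderDim {t : ℕ} (ht : 0 < t) {R : Fin t → γ → γ → Prop}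
    (hR : IsRealizer le R) :
    0 < orderDim le ∧ ∃ S : Fin (orderDim le) → γ → γ → Prop, IsRealizer le S :=
  Nat.sInf_mem (s := {t | 0 < t ∧ ∃ R : Fin t → γ → γ → Prop, IsRealizer le R})
    ⟨t, ht, R, hR⟩

theorem orderDim_eq_zero_of_not_exists
    (h : ¬ ∃ t, 0 < t ∧ ∃ R : Fin t → γ → γ → Prop, IsRealizer le R) : orderDim le = 0 :=
  Nat.sInf_eq_zero.2 (Or.inr (Set.eq_empty_of_forall_notMem fun t ht => h ⟨t, ht⟩))

theorem IsRealizer.comap {δ : Type*} {f : δ → γ} (hf : Function.Injective f) {t : ℕ}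
    {R : Fin t → γ → γ → Prop} (hR : IsRealizer le R) :
    IsRealizer (f ⁻¹'o le) (fun i => f ⁻¹'o R i) :=
  ⟨fun i => have := hR.1 i; (RelEmbedding.preimage ⟨f, hf⟩ (R i)).isLinearOrder,
    fun x y => hR.2 (f x) (f y)⟩

end Realizer

theorem exists_linearExtension_isLowerSet {α : Type*} [PartialOrder α] {S : Set α}
    (hS : IsLowerSet S) :
    ∃ L : α → α → Prop, IsLinearOrder α L ∧ (∀ x y, x ≤ y → L x y) ∧
      ∀ x y, L x y → y ∈ S → x ∈ S := by
  let r : α → α → Prop := fun x y => x ≤ y ∨ (x ∈ S ∧ y ∉ S)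
  have : IsPartialOrder α r :=
    { refl := fun x => Or.inl le_rfl
      trans := fun x y z hxy hyz => by
        rcases hxy with hxy | ⟨hx, hy⟩ <;> rcases hyz with hyz | ⟨hy', hz⟩
        · exact Or.inl (hxy.trans hyz)
        · exact Or.inr ⟨hS hxy hy', hz⟩
        · exact Or.inr ⟨hx, fun hz => hy (hS hyz hz)⟩
        · exact absurd hy' hy
      antisymm := fun x y hxy hyx => by
        rcases hxy with hxy | ⟨hx, hy⟩
        · rcases hyx with hyx | ⟨hy, hx⟩
          · exact le_antisymm hxy hyx
          · exact absurd (hS hxy hy) hx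
        · rcases hyx with hyx | ⟨hy', -⟩
          · exact absurd (hS hyx hx) hy
          · exact absurd hy' hy }
  obtain ⟨L, hL, hrL⟩ := extend_partialOrder r
  refine ⟨L, hL, fun x y h => hrL _ _ (Or.inl h), fun x y hxy hy => ?_⟩
  by_contra hx
  exact hx (antisymm hxy (hrL _ _ (Or.inr ⟨hy, hx⟩)) ▸ hy)

def spliceRel {α β : Type*} (r : α → α → Prop) (s : β → β → Prop) (P : α → Prop) :
    α ⊕ β → α ⊕ β → Prop
  | .inl x, .inl y => r x y
  | .inl x, .inr _ => P x
  | .inr _, .inl y => ¬ P y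
  | .inr c, .inr d => s c d

theorem isLinearOrder_spliceRel {α β : Type*} {r : α → α → Prop} {s : β → β → Prop}
    {P : α → Prop} [IsLinearOrder α r] [IsLinearOrder β s] (hP : ∀ x y, r x y → P y → P x) :
    IsLinearOrder (α ⊕ β) (spliceRel r s P) where
  refl := by rintro (x | c); exacts [refl_of r x, refl_of s c]
  trans := by
    rintro (x | c) (y | d) (z | e) <;> simp only [spliceRel] <;> intro h₁ h₂
    all_goals first
      | exact trans_of _ h₁ h₂ | exact hP _ _ h₁ h₂ | exact fun hz => h₁ (hP _ _ h₂ hz)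
      | exact h₁ | exact h₂ | exact absurd h₂ h₁
      | exact (total_of r x z).resolve_right fun h => h₂ (hP _ _ h h₁)
  antisymm := by
    rintro (x | c) (y | d) <;> simp only [spliceRel, Sum.inl.injEq, Sum.inr.injEq] <;>
      intro h₁ h₂
    all_goals first | exact antisymm h₁ h₂ | exact absurd h₁ h₂ | exact absurd h₂ h₁
  total := by
    rintro (x | c) (y | d) <;> simp only [spliceRel]
    · exact total_of r x y
    · exact em _
    · exact (em _).symm
    · exact total_of s c d

theorem IsRealizer.exists_adjunctLE {α β : Type*} [PartialOrder α] [LinearOrder β] {a b : α}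
    (hab : a < b) {t : ℕ} {R : Fin t → α → α → Prop} (hR : IsRealizer (· ≤ ·) R) :
    ∃ S : Fin (t + 1) → α ⊕ β → α ⊕ β → Prop, IsRealizer (adjunctLE a b) S := by
  obtain ⟨L, hL, hle_L, hL_lower⟩ := exists_linearExtension_isLowerSet (isUpperSet_Ici b).compl
  refine ⟨Fin.cons (spliceRel L (· ≤ ·) (· ∉ Set.Ici b))
    fun i => spliceRel (R i) (· ≤ ·) (R i · a), fun i => ?_, fun p q => ?_⟩
  · refine Fin.cases (isLinearOrder_spliceRel hL_lower) (fun i => ?_) i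
    have := hR.1 i
    exact isLinearOrder_spliceRel fun x y hxy hya => trans_of _ hxy hya
  rw [Fin.forall_fin_succ]
  simp only [Fin.cons_zero, Fin.cons_succ]
  rcases p with x | c <;> rcases q with y | d <;> simp only [spliceRel, adjunctLE]
  · exact ⟨fun h => ⟨hle_L x y h, (hR.2 x y).1 h⟩, fun h => (hR.2 x y).2 h.2⟩
  · exact ⟨fun h => ⟨fun hb => hab.not_ge (hb.trans h), (hR.2 x a).1 h⟩,
      fun h => (hR.2 x a).2 h.2⟩
  · refine ⟨fun hby => ⟨not_not_intro hby, fun i hya => ?_⟩, fun h => not_not.1 h.1⟩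
    have := hR.1 i
    have hay : R i a y := (hR.2 a y).1 (hab.le.trans hby) i
    exact hab.not_ge (antisymm hya hay ▸ hby)
  · exact ⟨fun h => ⟨h, fun _ => h⟩, And.left⟩

theorem dim_adjunct_chain_general {α : Type*} [Lattice α]
    {β : Type*} [LinearOrder β]
    {a b : α} (hab : a < b)
    {m : ℕ} (hm : orderDim ((· ≤ ·) : α → α → Prop) = m) :
    m ≤ orderDim (adjunctLE (α := α) (β := β) a b) ∧
      orderDim (adjunctLE (α := α) (β := β) a b) ≤ m + 1 := by
  subst hm
  by_cases hL : ∃ t, 0 < t ∧ ∃ R : Fin t → α → α → Prop, IsRealizer (· ≤ ·) R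
  · obtain ⟨t, ht, R, hR⟩ := hL
    obtain ⟨-, R, hR⟩ := exists_isRealizer_orderDim ht hR
    obtain ⟨S, hS⟩ := hR.exists_adjunctLE (β := β) hab
    obtain ⟨hpos, S', hS'⟩ := exists_isRealizer_orderDim (Nat.succ_pos _) hS
    exact ⟨orderDim_le_of_isRealizer hpos (hS'.comap Sum.inl_injective),
      orderDim_le_of_isRealizer (Nat.succ_pos _) hS⟩
  · have hL' : ¬ ∃ t, 0 < t ∧ ∃ R : Fin t → α ⊕ β → α ⊕ β → Prop,
        IsRealizer (adjunctLE a b) R :=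
      fun ⟨t, ht, _, hR⟩ => hL ⟨t, ht, _, hR.comap Sum.inl_injective⟩
    rw [orderDim_eq_zero_of_not_exists hL, orderDim_eq_zero_of_not_exists hL']
    omega

/-- adjoining a finite nonempty chain to a finite lattice `L`
with `|L| ≥ 3` and `Dim L = m` yields a lattice of dimension between `m`
and `m + 1`. -/
theorem dim_adjunct_chain {α : Type*} [Lattice α] [Finite α]
    {β : Type*} [LinearOrder β] [Finite β] [Nonempty β]
    (hcard : 3 ≤ Nat.card α) {a b : α} (hab : a < b) (hcov : ¬ a ⋖ b)
    {m : ℕ} (hm : orderDim ((· ≤ ·) : α → α → Prop) = m) :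
    m ≤ orderDim (adjunctLE (α := α) (β := β) a b) ∧
      orderDim (adjunctLE (α := α) (β := β) a b) ≤ m + 1 :=
  dim_adjunct_chain_general hab hm
end

section
/- Let L be a finite lattice that is the adjunct L = K ]ᵇₐ M of a sublattice K with a nonempty chain M, with respect to a pair a < b in K with b not covering a in K. Then Dim(L) ≤ Dim(K) + 1. -/
/-! If `R₁, …, R_d` realize `K`, insert the chain `M` into each `Rᵢ` immediately below `b`, and
add a `(d+1)`-st linear extension of `K` in which the down-set `↓a` comes first, followed directly
by `M`. In the first `d` orders `m < y` for all `y` with `b ≤ y` and `x < m` otherwise, so their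
intersection decides exactly the comparabilities `M ≤ y`; the last order decides `x ≤ M`, which
holds there iff `x ≤ a`. Since `a < b`, all `d + 1` orders extend the adjunct order. -/

section LinearExtensions

variable {α : Type*}

lemma isLinearOrder_of_injective {γ : Type*} [LinearOrder γ] {f : α → γ}
    (hf : Function.Injective f) : IsLinearOrder α (fun u v => f u ≤ f v) :=
  letI := LinearOrder.lift' f hf
  inferInstanceAs (IsLinearOrder α (· ≤ ·))

lemma exists_linearExtension_lowerSet_first [PartialOrder α] {D : Set α} (hD : IsLowerSet D) :
    ∃ s : α → α → Prop, IsLinearOrder α s ∧ (∀ u v, u ≤ v → s u v) ∧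
      ∀ u ∈ D, ∀ v ∉ D, ¬ s v u := by
  classical
  let f : α → Bool ×ₗ LinearExtension α := fun u => toLex (decide (u ∉ D), toLinearExtension u)
  have hf : Function.Injective f := fun u v h => (Prod.ext_iff.1 (toLex.injective h)).2
  refine ⟨fun u v => f u ≤ f v, isLinearOrder_of_injective hf, fun u v huv => ?_,
    fun u hu v hv => ?_⟩
  · by_cases hv : v ∈ D
    · simp [f, Prod.Lex.toLex_le_toLex, hv, hD huv hv, toLinearExtension.monotone huv]
    · by_cases hu : u ∈ D
      · simp [f, Prod.Lex.toLex_le_toLex, hv, hu]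
      · simp [f, Prod.Lex.toLex_le_toLex, hv, hu, toLinearExtension.monotone huv]
  · simp [f, Prod.Lex.toLex_le_toLex, hu, hv]

end LinearExtensions

section InsertAtCut

variable {α β : Type*}

def insertAtCut [LE β] (r : α → α → Prop) (C : Set α) : α ⊕ β → α ⊕ β → Prop
  | .inl x, .inl y => r x y
  | .inl x, .inr _ => x ∈ C
  | .inr _, .inl y => y ∉ C
  | .inr m, .inr m' => m ≤ m'

lemma isLinearOrder_insertAtCut [LinearOrder β] {r : α → α → Prop} [IsLinearOrder α r]
    {C : Set α} (hC : ∀ x y, r x y → y ∈ C → x ∈ C) :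
    IsLinearOrder (α ⊕ β) (insertAtCut r C) := by
  have htrans : ∀ x y z, r x y → r y z → r x z := fun _ _ _ => _root_.trans
  have htotal : ∀ x y, r x y ∨ r y x := Std.Total.total
  have hanti : ∀ x y, r x y → r y x → x = y := fun _ _ => Std.Antisymm.antisymm _ _
  refine { refl := ?_, trans := ?_, antisymm := ?_, total := ?_ }
  · rintro (x | m) <;> simp [insertAtCut, Std.Refl.refl (r := r)]
  · rintro (x | m) (y | m') (z | m'') <;> simp only [insertAtCut] <;> grind
  · rintro (x | m) (y | m') <;>
      simp only [insertAtCut, Sum.inl.injEq, Sum.inr.injEq, reduceCtorEq] <;> grind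
  · rintro (x | m) (y | m') <;> simp only [insertAtCut] <;> grind

end InsertAtCut

namespace IsRealizer

variable {α : Type*} {le : α → α → Prop} {t : ℕ} {R : Fin t → α → α → Prop}

lemma orderDim_le (hR : IsRealizer le R) (ht : 0 < t) : orderDim le ≤ t :=
  Nat.sInf_le ⟨ht, R, hR⟩

lemma rel_of_le (hR : IsRealizer le R) {x y : α} (h : le x y) (i : Fin t) : R i x y :=
  (hR.2 x y).1 h i

end IsRealizer

lemma exists_isRealizer {α : Type*} [PartialOrder α] [Finite α] :
    ∃ R : Fin (Nat.card α) → α → α → Prop, IsRealizer ((· ≤ ·) : α → α → Prop) R := by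
  choose s hlin hext hfirst using
    fun y : α => exists_linearExtension_lowerSet_first (isLowerSet_Iic y)
  refine ⟨fun i => s ((Finite.equivFin α).symm i), fun i => hlin _,
    fun x y => ⟨fun h i => hext _ _ _ h, fun h => ?_⟩⟩
  by_contra hxy
  exact hfirst y y le_rfl x hxy (by simpa using h (Finite.equivFin α y))

lemma exists_isRealizer_orderDim_s11 (α : Type*) [PartialOrder α] [Finite α] [Nonempty α] :
    ∃ R : Fin (orderDim ((· ≤ ·) : α → α → Prop)) → α → α → Prop,
      IsRealizer ((· ≤ ·) : α → α → Prop) R := by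
  have hne : ∃ t, 0 < t ∧ ∃ R : Fin t → α → α → Prop, IsRealizer ((· ≤ ·) : α → α → Prop) R :=
    ⟨Nat.card α, Nat.card_pos, exists_isRealizer⟩
  exact (Nat.sInf_mem hne).2

lemma IsRealizer.exists_isRealizer_adjunctLE {α β : Type*} [PartialOrder α] [LinearOrder β]
    {d : ℕ} {R : Fin d → α → α → Prop} (hR : IsRealizer ((· ≤ ·) : α → α → Prop) R)
    {a b : α} (hab : a < b) :
    ∃ R' : Fin (d + 1) → α ⊕ β → α ⊕ β → Prop, IsRealizer (adjunctLE a b) R' := by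
  obtain ⟨Q, hQ, hQext, hQfirst⟩ := exists_linearExtension_lowerSet_first (isLowerSet_Iic a)
  have := hR.1
  refine ⟨Fin.snoc (fun i => insertAtCut (R i) {x | ¬ R i b x}) (insertAtCut Q (Set.Iic a)),
    Fin.forall_fin_succ'.2 ⟨fun i => ?_, ?_⟩, fun u v => ?_⟩
  · simp only [Fin.snoc_castSucc]
    exact isLinearOrder_insertAtCut fun x y hxy hby hbx => hby (_root_.trans hbx hxy)
  · simp only [Fin.snoc_last]
    exact isLinearOrder_insertAtCut fun x y hxy hya =>
      by_contra fun hxa => hQfirst y hya x hxa hxy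
  rw [Fin.forall_fin_succ']
  simp only [Fin.snoc_castSucc, Fin.snoc_last]
  rcases u with x | m <;> rcases v with y | m' <;>
    simp only [adjunctLE, insertAtCut, Set.mem_ofPred_eq, Set.mem_Iic, not_not]
  · exact ⟨fun h => ⟨hR.rel_of_le h, hQext _ _ h⟩, fun h => (hR.2 x y).2 h.1⟩
  · refine ⟨fun hxa => ⟨fun i hbx => hab.ne ?_, hxa⟩, And.right⟩
    exact Std.Antisymm.antisymm _ _ (hR.rel_of_le hab.le i)
      (_root_.trans hbx (hR.rel_of_le hxa i))
  · exact ⟨fun h => ⟨hR.rel_of_le h, fun hya => hab.not_ge (h.trans hya)⟩,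
      fun h => (hR.2 b y).2 h.1⟩
  · exact ⟨fun h => ⟨fun _ => h, h⟩, And.right⟩

theorem dim_adjunct_chain_le_succ_general {α : Type*} [Lattice α] [Finite α]
    {β : Type*} [LinearOrder β]
    {a b : α} (hab : a < b) :
    orderDim (adjunctLE (α := α) (β := β) a b) ≤
      orderDim ((· ≤ ·) : α → α → Prop) + 1 := by
  have : Nonempty α := ⟨a⟩
  obtain ⟨R, hR⟩ := exists_isRealizer_orderDim_s11 α
  obtain ⟨R', hR'⟩ := hR.exists_isRealizer_adjunctLE (β := β) hab
  exact hR'.orderDim_le (Nat.succ_pos _)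

/-- if `L = K ]ᵇₐ M` where `M` is a nonempty chain then
`Dim L ≤ Dim K + 1`. -/
theorem dim_adjunct_chain_le_succ {α : Type*} [Lattice α] [Finite α]
    {β : Type*} [LinearOrder β] [Finite β] [Nonempty β]
    {a b : α} (hab : a < b) (hcov : ¬ a ⋖ b) :
    orderDim (adjunctLE (α := α) (β := β) a b) ≤
      orderDim ((· ≤ ·) : α → α → Prop) + 1 :=
  dim_adjunct_chain_le_succ_general hab
end
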